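/- Existence of 1-comparator gadgets: for every ℓ ≥ 1, a 1-comparator gadget exists. -/

import Mathlib

/-!
For `k = 1` the children of the root of an encoder are leaves `(m, ω^j)`, such a leaf
encodes `j`, and the tree encodes `⊕ ω^j` over its leaves; as this is below `(Ω₂)_ℓ = ω^ℓ`,
all `j` are below `ℓ`, so finitely many states can remember one of them. The gadget reads `j_A` off `v_A`
into the root, then reads `j_B` off `v_B`, relabels `v_B` by the outcome of the comparison and
stores in the root the outcome due to `v_A`, and finally writes it to `v_A` while relabelling the
root `end_cmp`. Because `v_A` and `v_B` are the only children carrying their labels, every run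
from a comparator encoder follows this single path, which deletes no node.
-/

/-- Finite rooted ordered representation of finite rooted *unordered* labelled trees.
Unorderedness is handled by comparing trees up to permutation of children. -/
inductive STree (Q : Type) : Type
  | node (label : Q) (children : List (STree Q)) : STree Q

namespace STree

variable {Q : Type}

/-- The label of the root. -/
def rootLabel : STree Q → Q
  | node a _ => a

/-- The children of the root. -/
def children : STree Q → List (STree Q)
  | node _ ts => ts

end STree

mutual
  /-- Number of nodes. -/
  def STree.size {Q : Type} : STree Q → ℕ
    | .node _ ts => 1 + STree.sizeL ts
  /-- Total number of nodes of a list of trees. -/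
  def STree.sizeL {Q : Type} : List (STree Q) → ℕ
    | [] => 0
    | t :: ts => STree.size t + STree.sizeL ts
end

mutual
  /-- Height (a single node has height 0). -/
  def STree.height {Q : Type} : STree Q → ℕ
    | .node _ ts => STree.heightL ts
  /-- One plus the maximal height of a list of trees (0 for the empty list). -/
  def STree.heightL {Q : Type} : List (STree Q) → ℕ
    | [] => 0
    | t :: ts => max (STree.height t + 1) (STree.heightL ts)
end

namespace STree

end STree

mutual
  /-- `TreeLe C C'` is the induced-subtree ordering `C ≤_is C'`: `C` is obtained from `C'`
  by deleting whole subtrees (equivalently, there is a root-preserving, label-preserving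
  injection of the nodes of `C` into the nodes of `C'` such that two nodes are adjacent in
  `C` iff their images are adjacent in `C'`). -/
  inductive TreeLe {Q : Type} : STree Q → STree Q → Prop
    | node {a : Q} {ts us : List (STree Q)} :
        ForestLe ts us → TreeLe (.node a ts) (.node a us)

  /-- An (unordered) embedding of a list of trees into another: an injection matching each
  tree on the left with a distinct tree on the right that dominates it w.r.t. `TreeLe`. -/
  inductive ForestLe {Q : Type} : List (STree Q) → List (STree Q) → Prop
    | nil (us : List (STree Q)) : ForestLe [] us
    | cons {t u : STree Q} {ts us : List (STree Q)} :
        TreeLe t u → ForestLe ts us → ForestLe (t :: ts) (u :: us)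
    | skip {u : STree Q} {ts us : List (STree Q)} :
        ForestLe ts us → ForestLe ts (u :: us)
    | permR {ts us us' : List (STree Q)} :
        ForestLe ts us → us.Perm us' → ForestLe ts us'
end

mutual
  /-- Equality of trees as finite rooted *unordered* labelled trees. -/
  inductive TreeEquiv {Q : Type} : STree Q → STree Q → Prop
    | node {a : Q} {ts us : List (STree Q)} :
        ForestEquiv ts us → TreeEquiv (.node a ts) (.node a us)

  /-- Lists of trees matched bijectively (up to permutation) by `TreeEquiv`. -/
  inductive ForestEquiv {Q : Type} : List (STree Q) → List (STree Q) → Prop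
    | nil : ForestEquiv [] []
    | cons {t u : STree Q} {ts us : List (STree Q)} :
        TreeEquiv t u → ForestEquiv ts us → ForestEquiv (t :: ts) (u :: us)
    | permR {ts us us' : List (STree Q)} :
        ForestEquiv ts us → us.Perm us' → ForestEquiv ts us'
end

/-- `HasPath ps t` : there is a path from the root of `t` (inclusive) whose successive
labels are exactly the (nonempty) list `ps`. -/
inductive HasPath {Q : Type} : List Q → STree Q → Prop
  | single (p : Q) (ts : List (STree Q)) : HasPath [p] (.node p ts)
  | cons (p : Q) {ps : List Q} {ts : List (STree Q)} {t : STree Q} :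
      t ∈ ts → HasPath ps t → HasPath (p :: ps) (.node p ts)

/-- `mkChain q qs` is the path-shaped tree with labels `q, qs...`. -/
def mkChain {Q : Type} : Q → List Q → STree Q
  | q, [] => .node q []
  | q, r :: rest => .node q [mkChain r rest]

/-- Attach the (possibly empty) fresh chain labelled `qs` as a new child. -/
def attachChain {Q : Type} : List Q → List (STree Q) → List (STree Q)
  | [], ts => ts
  | r :: rest, ts => mkChain r rest :: ts

/-- Application of an update transition `(p_0,…,p_i) →u (q_0,…,q_j)` (given as the two label
lists) to a configuration: fire along a root path labelled `p_0,…,p_i`, relabel the common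
prefix, and either create fresh nodes labelled `q_{i+1},…,q_j` (if `i ≤ j`) or delete the
subtree rooted at `v_{j+1}` (if `j < i`). -/
inductive UStep {Q : Type} : List Q → List Q → STree Q → STree Q → Prop
  | last (p q : Q) (rest : List Q) (ts : List (STree Q)) :
      UStep [p] (q :: rest) (.node p ts) (.node q (attachChain rest ts))
  | delete (p q : Q) {ps : List Q} (hps : ps ≠ []) {t : STree Q} (l r : List (STree Q)) :
      HasPath ps t →
      UStep (p :: ps) [q] (.node p (l ++ t :: r)) (.node q (l ++ r))
  | go (p q : Q) {ps qs : List Q} (hps : ps ≠ []) (hqs : qs ≠ []) {t t' : STree Q}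
      (l r : List (STree Q)) :
      UStep ps qs t t' →
      UStep (p :: ps) (q :: qs) (.node p (l ++ t :: r)) (.node q (l ++ t' :: r))

/-- Application of a reset transition `(p_0,…,p_i) →r,x (q_0,…,q_i)` to a configuration:
fire along a root path labelled `p_0,…,p_i`, relabel it to `q_0,…,q_i`, and delete every
subtree rooted at a child of the last path node whose label is `x`. -/
inductive RStep {Q : Type} [DecidableEq Q] : List Q → Q → List Q → STree Q → STree Q → Prop
  | last (p q x : Q) (ts : List (STree Q)) :
      RStep [p] x [q] (.node p ts) (.node q (ts.filter (fun t => t.rootLabel ≠ x)))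
  | go (p q x : Q) {ps qs : List Q} (hps : ps ≠ []) {t t' : STree Q} (l r : List (STree Q)) :
      RStep ps x qs t t' →
      RStep (p :: ps) x (q :: qs) (.node p (l ++ t :: r)) (.node q (l ++ t' :: r))

/-- A transition of a `k`-NRCS : either an update transition or a reset transition,
presented by its label lists. -/
inductive NTrans (Q : Type) : Type
  | upd (ps qs : List Q) : NTrans Q
  | rst (ps : List Q) (x : Q) (qs : List Q) : NTrans Q

/-- A `k`-NRCS `(Q, δ_u, δ_r)` : a finite set of update transitions
`δ_u ⊆ ⋃_{1 ≤ i,j ≤ k+1} Q^i × Q^j` and a finite set of reset transitions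
`δ_r ⊆ ⋃_{1 ≤ i ≤ k} Q^i × Q × Q^i` (the state set is the ambient type `Q`). -/
structure NRCS (Q : Type) [DecidableEq Q] (k : ℕ) where
  update : Finset (List Q × List Q)
  reset : Finset (List Q × Q × List Q)
  update_wf : ∀ t ∈ update, 1 ≤ t.1.length ∧ t.1.length ≤ k + 1 ∧
      1 ≤ t.2.length ∧ t.2.length ≤ k + 1
  reset_wf : ∀ t ∈ reset, 1 ≤ t.1.length ∧ t.1.length ≤ k ∧ t.2.2.length = t.1.length

namespace NRCS

variable {Q : Type} [DecidableEq Q] {k : ℕ}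

/-- Membership of a transition in an NRCS. -/
def hasTrans (N : NRCS Q k) : NTrans Q → Prop
  | .upd ps qs => (ps, qs) ∈ N.update
  | .rst ps x qs => (ps, x, qs) ∈ N.reset

/-- `C →_t C'` : a step via the particular transition `t`. -/
def TransStep : NTrans Q → STree Q → STree Q → Prop
  | .upd ps qs, C, C' => UStep ps qs C C'
  | .rst ps x qs, C, C' => RStep ps x qs C C'

/-- The step relation `C → C'` of the NRCS `N`. -/
def Step (N : NRCS Q k) (C C' : STree Q) : Prop :=
  ∃ t : NTrans Q, N.hasTrans t ∧ TransStep t C C'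

/-- Reachability `C →* C'` (reflexive-transitive closure of the step relation). -/
def Reaches (N : NRCS Q k) : STree Q → STree Q → Prop :=
  Relation.ReflTransGen N.Step

/-- The lossy step relation: first delete some whole subtrees, then take a standard step. -/
def LossyStep (N : NRCS Q k) (C D : STree Q) : Prop :=
  ∃ C₀ : STree Q, TreeLe C₀ C ∧ N.Step C₀ D

/-- Lossy reachability. -/
def LossyReaches (N : NRCS Q k) : STree Q → STree Q → Prop :=
  Relation.ReflTransGen N.LossyStep

end NRCS

/-! Ordinals below `ε₀` are represented in Cantor normal form by Mathlib's type `ONote`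
(`ONote.oadd e n a` represents `ω^e·n + a`; `ONote.NF` is the Cantor normal form predicate). -/

/-- Number of `oadd` constructors (used as a termination measure). -/
def ONote.cnt : ONote → ℕ
  | .zero => 0
  | .oadd e _ a => e.cnt + a.cnt + 1

/-- Natural (Hessenberg) sum `⊕` of two ordinal notations: merge the CNFs in
decreasing order of exponents, adding coefficients of equal exponents. -/
def ONote.nadd : ONote → ONote → ONote
  | .zero, y => y
  | .oadd e₁ n₁ a₁, .zero => .oadd e₁ n₁ a₁
  | .oadd e₁ n₁ a₁, .oadd e₂ n₂ a₂ =>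
    match ONote.cmp e₁ e₂ with
    | .lt => .oadd e₂ n₂ (ONote.nadd (.oadd e₁ n₁ a₁) a₂)
    | .eq => .oadd e₁ (n₁ + n₂) (ONote.nadd a₁ a₂)
    | .gt => .oadd e₁ n₁ (ONote.nadd a₁ (.oadd e₂ n₂ a₂))
  termination_by x y => x.cnt + y.cnt
  decreasing_by all_goals (simp [ONote.cnt] <;> omega)

/-- `scaleN e m t` is `ω^e·m + t` (which is just `t` when `m = 0`). -/
def ONote.scaleN (e : ONote) (m : ℕ) (t : ONote) : ONote :=
  match m with
  | 0 => t
  | m + 1 => .oadd e ⟨m + 1, Nat.succ_pos m⟩ t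

/-- Ordinal multiplication by a natural number:
`(ω^e·c + a)·m = ω^e·(c·m) + a` for `m ≥ 1`, and `α·0 = 0`. -/
def ONote.omulNat : ONote → ℕ → ONote
  | _, 0 => .zero
  | .zero, _ => .zero
  | .oadd e c a, m + 1 => .oadd e (c * ⟨m + 1, Nat.succ_pos m⟩) a

/-- Helper for `ONote.Dn`: `DnAux n pre β` computes
`⊕_i ω^{pre ⊕ (β minus its i-th group) ⊕ ω^{γ_i}·(c_i−1) ⊕ γ_i·(n−1) ⊕ D_n(ω^{γ_i})}·(c_i·n)`
where `β = ω^{γ_1}·c_1 + … + ω^{γ_d}·c_d` in strict CNF and `pre` accumulates the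
already processed groups. -/
def ONote.DnAux (n : ℕ) : ONote → ONote → ONote
  | _, .zero => .zero
  | pre, .oadd e c rest =>
    ONote.nadd
      (ONote.scaleN
        (ONote.nadd (ONote.nadd (ONote.nadd pre rest) (ONote.scaleN e ((c : ℕ) - 1) .zero))
          (ONote.nadd (ONote.omulNat e (n - 1)) (ONote.DnAux n .zero e)))
        ((c : ℕ) * n) .zero)
      (ONote.DnAux n (ONote.nadd pre (.oadd e c .zero)) rest)
  termination_by _ β => β.cnt
  decreasing_by all_goals (simp [ONote.cnt] <;> omega)

/-- `Dn n β` is `D_n(ω^β)` : `D_n(ω^0) = 0` and, for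
`β = ω^{η_1} ⊕ … ⊕ ω^{η_m} > 0` in CNF,
`D_n(ω^β) = ⊕_{i=1}^m ω^{(⊕_{p≠i} ω^{η_p}) ⊕ η_i·(n−1) ⊕ D_n(ω^{η_i})}·n`. -/
def ONote.Dn (n : ℕ) (β : ONote) : ONote :=
  ONote.DnAux n .zero β

/-- Helper for `ONote.deltaList`, processing the groups of the strict CNF one by one. -/
def ONote.deltaAux (n : ℕ) : ONote → ONote → List ONote
  | _, .zero => []
  | pre, .oadd e c rest =>
    (ONote.nadd (ONote.nadd pre rest)
        (ONote.nadd (ONote.scaleN e ((c : ℕ) - 1) .zero) (ONote.Dn n e)))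
      :: ONote.deltaAux n (ONote.nadd pre (.oadd e c .zero)) rest

/-- The finite set `δ_n(α)` (as a list) : for `α = ω^{β_1}·c_1 ⊕ … ⊕ ω^{β_d}·c_d > 0` in
strict CNF, `δ_n(α) = { (⊕_{p≠i} ω^{β_p}·c_p) ⊕ ω^{β_i}·(c_i−1) ⊕ D_n(ω^{β_i}) : 1 ≤ i ≤ d }`. -/
def ONote.deltaList (n : ℕ) (α : ONote) : List ONote :=
  ONote.deltaAux n .zero α

/-- `α` is `ℓ`-lean : every coefficient appearing hereditarily in the CNF of `α`
(in `α` and in all exponents) is at most `ℓ`. -/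
def ONote.IsLean (l : ℕ) : ONote → Prop
  | .zero => True
  | .oadd e c a => (c : ℕ) ≤ l ∧ ONote.IsLean l e ∧ ONote.IsLean l a

/-- `Ω_k`, the height-`k` tower of `ω` : `Ω_1 = ω` and `Ω_{k+1} = ω^{Ω_k}`
(with the convention `Ω_0 = 1`). -/
def ONote.OmegaTower : ℕ → ONote
  | 0 => 1
  | k + 1 => .oadd (ONote.OmegaTower k) 1 .zero

/-- `(Ω_k)_ℓ`, the `ℓ`-th element of the fundamental sequence of the tower `Ω_k` :
`(Ω_1)_ℓ = ℓ` and `(Ω_{k+1})_ℓ = ω^{(Ω_k)_ℓ}`. -/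
def ONote.towerFS : ℕ → ℕ → ONote
  | 0, l => ONote.ofNat l
  | 1, l => ONote.ofNat l
  | k + 2, l => .oadd (ONote.towerFS (k + 1) l) 1 .zero

/-- Classification of a CNF ordinal notation together with the fixed assignment of
fundamental sequences: `.inl none` for `0`, `.inl (some β)` for the successor of `β`, and
`.inr f` for a limit with fundamental sequence `f`. The assignment is the standard one:
`(γ + ω^{β+1})_x = γ + ω^β·x` and `(γ + ω^λ)_x = γ + ω^{λ_x}` for limit `λ`. -/
def ONote.fundSeq : ONote → (Option ONote) ⊕ (ℕ → ONote)
  | .zero => .inl none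
  | .oadd e c a =>
    match ONote.fundSeq a with
    | .inl (some a') => .inl (some (.oadd e c a'))
    | .inr f => .inr (fun x => .oadd e c (f x))
    | .inl none =>
      match e, ONote.fundSeq e with
      | .zero, _ => .inl (some (ONote.scaleN .zero ((c : ℕ) - 1) .zero))
      | _, .inl (some e') => .inr (fun x => ONote.scaleN e ((c : ℕ) - 1) (ONote.scaleN e' x .zero))
      | _, .inr f => .inr (fun x => ONote.scaleN e ((c : ℕ) - 1) (.oadd (f x) 1 .zero))
      | _, .inl none => .inl none

/-- The Hardy hierarchy `(H^α)_{α<ε₀}` for the successor function, as a relation: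
`HardyRel α n m` holds iff `H^α(n) = m`. It is the graph of the recursion
`H^0(x) = x`, `H^{α+1}(x) = H^α(x+1)`, `H^λ(x) = H^{λ_x}(x)`. -/
inductive HardyRel : ONote → ℕ → ℕ → Prop
  | zero (n : ℕ) : HardyRel .zero n n
  | succ {α β : ONote} {n m : ℕ} : ONote.fundSeq α = .inl (some β) →
      HardyRel β (n + 1) m → HardyRel α n m
  | limit {α : ONote} {f : ℕ → ONote} {n m : ℕ} : ONote.fundSeq α = .inr f →
      HardyRel (f n) n m → HardyRel α n m

/-- The Cichoń hierarchy `(h_α)_{α<ε₀}` for a function `h : ℕ → ℕ`, as a relation: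
`CichonRel h α x y` holds iff `h_α(x) = y`. It is the graph of the recursion
`h_0(x) = 0`, `h_{α+1}(x) = 1 + h_α(h(x))`, `h_λ(x) = h_{λ_x}(x)`. -/
inductive CichonRel (h : ℕ → ℕ) : ONote → ℕ → ℕ → Prop
  | zero (x : ℕ) : CichonRel h .zero x 0
  | succ {α β : ONote} {x y : ℕ} : ONote.fundSeq α = .inl (some β) →
      CichonRel h β (h x) y → CichonRel h α x (y + 1)
  | limit {α : ONote} {f : ℕ → ONote} {x y : ℕ} : ONote.fundSeq α = .inr f →
      CichonRel h (f x) x y → CichonRel h α x y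

/-- The `m`-predecessor operation `P_m`, as a relation: `PRel m α β` holds iff
`P_m(α) = β`, where `P_m(β+1) = β` and `P_m(λ) = P_m(λ_m)` for limit `λ`. -/
inductive PRel (m : ℕ) : ONote → ONote → Prop
  | succ {α β : ONote} : ONote.fundSeq α = .inl (some β) → PRel m α β
  | limit {α β : ONote} {f : ℕ → ONote} : ONote.fundSeq α = .inr f →
      PRel m (f m) β → PRel m α β

/-- The Hardy rewrite relation `→_H` on pairs of an ordinal below `ε₀` and a natural
number, generated by `(α+1, n) →_H (α, n+1)` and `(λ, n) →_H (λ_n, n)` for limit `λ`. -/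
inductive HStep : ONote × ℕ → ONote × ℕ → Prop
  | succ {α β : ONote} {n : ℕ} : ONote.fundSeq α = .inl (some β) → HStep (α, n) (β, n + 1)
  | limit {α : ONote} {f : ℕ → ONote} {n : ℕ} : ONote.fundSeq α = .inr f →
      HStep (α, n) (f n, n)

/-- `→*_H`, the reflexive-transitive closure of the Hardy rewrite relation. -/
def HardyRT : ONote × ℕ → ONote × ℕ → Prop :=
  Relation.ReflTransGen HStep

/-- The label alphabet used by the nested reset counter systems of the constructions:
it contains the distinguished labels `ω` and `#`, all gadget control labels, the
compressed last-level labels `ω^j` (`pow j`), pairs `(m, ω^j)` of an arbitrary label with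
a last-level label `ω^j`, and countably many further auxiliary labels. -/
inductive GLab : Type
  | omega | hash
  | startCopy | endCopy | mrkd | cpd
  | startSm | endSm | smallest
  | startBig | endBig | biggest
  | startCmp | endCmp | acmp | bcmp | equalCmp | bigCmp | smallCmp
  | pow (j : ℕ)
  | pair (m : GLab) (j : ℕ)
  | aux (i : ℕ)
  deriving DecidableEq

/-- The base of a label: `(m, ω^j) ↦ m` and every other label is its own base.
(Following the convention that a node at the last level "labelled by `x`" means that it
carries the pair `(x, ω^j)` recording its original last-level label `ω^j`.) -/
def GLab.baseOf : GLab → GLab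
  | .pair m _ => m
  | l => l

/-- Relabel to base `x`, preserving the recorded last-level label of a pair. -/
def GLab.relabTo (x : GLab) : GLab → GLab
  | .pair _ j => .pair x j
  | _ => x

/-- The number of terms of the CNF of an ordinal notation (for `β < ω` this is `β`). -/
def ONote.termCount : ONote → ℕ
  | .zero => 0
  | .oadd _ c a => (c : ℕ) + ONote.termCount a

/-- `mkForest d α` : the forest `FO_α` of the trees of the CNF terms of `α`, where `d`
levels are available below the current one; nodes at the last available level are
compressed, together with their children, into single leaves labelled `ω^j` (`pow j`). -/
def mkForest : ℕ → ONote → List (STree GLab)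
  | _, .zero => []
  | 0, .oadd _ _ _ => []
  | 1, .oadd e c a =>
      List.replicate (c : ℕ) (STree.node (.pow e.termCount) []) ++ mkForest 1 a
  | d + 2, .oadd e c a =>
      List.replicate (c : ℕ) (STree.node .omega (mkForest (d + 1) e)) ++ mkForest (d + 2) a

/-- The tree `T_α` (for `α ≤ (Ω_{k+1})_ℓ`): the trees of `FO_α` attached to a new root
labelled `ω`, with all nodes at level `k` compressed into leaves labelled `ω^j`. -/
def Ttree (k : ℕ) (α : ONote) : STree GLab :=
  .node .omega (mkForest k α)

/-- The configuration `C_{α,n}` : the tree `T_α` with `n` additional children of the root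
labelled `#`. -/
def Cfg (k : ℕ) (α : ONote) (n : ℕ) : STree GLab :=
  .node .omega (mkForest k α ++ List.replicate n (STree.node .hash []))

mutual
  /-- The ordinal encoded by (a subtree of) an encoder, where `d` levels are available
  below the current node: a last-level node (`d = 0`) encodes the `j` recorded in its label
  `ω^j` or `(m, ω^j)`, and otherwise the node encodes `⊕_{c child} ω^{ordinal of c}`. -/
  def decodeT : ℕ → STree GLab → ONote
    | 0, .node l _ =>
        (match l with
          | .pow j => ONote.ofNat j
          | .pair _ j => ONote.ofNat j
          | _ => .zero)
    | d + 1, .node _ ts => decodeL d ts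
  /-- The natural sum `⊕_t ω^{ordinal of t}` over a list of trees. -/
  def decodeL : ℕ → List (STree GLab) → ONote
    | _, [] => .zero
    | d, t :: ts => ONote.nadd (.oadd (decodeT d t) 1 .zero) (decodeL d ts)
end

mutual
  /-- Well-formedness of (a subtree of) an encoder with `d` available levels below the
  current node: nodes at the last level are leaves labelled by pairs `(m, ω^j)`, and all
  other nodes carry arbitrary labels. -/
  def WFEncT : ℕ → STree GLab → Prop
    | 0, .node l ts => ts = [] ∧ ∃ (m : GLab) (j : ℕ), l = .pair m j
    | d + 1, .node _ ts => WFEncL d ts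
  /-- All trees of the list are well-formed with `d` available levels. -/
  def WFEncL : ℕ → List (STree GLab) → Prop
    | _, [] => True
    | d, t :: ts => WFEncT d t ∧ WFEncL d ts
end

/-- An encoder for `α` (of height at most `k`): any labelled tree obtained from `T_α` by
replacing the label of each node at levels `0,…,k−1` by an arbitrary label and the label
`ω^j` of each node at level `k` by a pair `(m, ω^j)` for an arbitrary label `m`.
Equivalently: a well-formed tree that encodes `α`. -/
def IsEncoder (k : ℕ) (α : ONote) (T : STree GLab) : Prop :=
  WFEncT k T ∧ decodeT k T = α

/-- A marked encoder for `α` : an encoder for `α` whose root is labelled `start_copy` and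
exactly one child `v` of the root is labelled `mrkd`. -/
def MarkedEncoder (k : ℕ) (α : ONote) (T : STree GLab) : Prop :=
  IsEncoder k α T ∧ T.rootLabel = .startCopy ∧
    T.children.countP (fun t => decide (t.rootLabel.baseOf = GLab.mrkd)) = 1

/-- A lossy copy encoder for a marked encoder `T` (with marked child `v`): obtained from
`T` by deleting some (possibly zero) whole subtrees inside the subtree of `v`, duplicating
this subtree as a new child subtree of the root, deleting some (possibly zero) further
subtrees inside the subtree of `v`, and relabelling the root to `end_copy`, `v` to `ω`,
and the root of the copy to `cpd`. -/
def LossyCopyEnc (T T' : STree GLab) : Prop :=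
  ∃ (l r : List (STree GLab)) (lv : GLab) (cs cs₁ cs₂ : List (STree GLab)),
    T = .node .startCopy (l ++ .node lv cs :: r) ∧ lv.baseOf = .mrkd ∧
    ForestLe cs₁ cs ∧ ForestLe cs₂ cs₁ ∧
    TreeEquiv T'
      (.node .endCopy
        (l ++ .node (GLab.relabTo .omega lv) cs₂ :: r ++ [.node (GLab.relabTo .cpd lv) cs₁]))

/-- A perfect copy encoder for `T` : the lossy copy encoder in which no nodes are deleted. -/
def PerfectCopyEnc (T T' : STree GLab) : Prop :=
  ∃ (l r : List (STree GLab)) (lv : GLab) (cs : List (STree GLab)),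
    T = .node .startCopy (l ++ .node lv cs :: r) ∧ lv.baseOf = .mrkd ∧
    TreeEquiv T'
      (.node .endCopy
        (l ++ .node (GLab.relabTo .omega lv) cs :: r ++ [.node (GLab.relabTo .cpd lv) cs]))

/-- A `k`-copy gadget : a `k`-NRCS such that for every `α ≤ (Ω_{k+1})_ℓ` and every marked
encoder `T` for `α` : (1) there is a run from `T` to a perfect copy encoder of `T`, and
(2) every run from `T` ending in a tree whose root is labelled `end_copy` ends in a lossy
copy encoder of `T`. -/
def IsCopyGadget (k l : ℕ) (N : NRCS GLab k) : Prop :=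
  ∀ α : ONote, α.NF → α ≤ ONote.towerFS (k + 1) l →
    ∀ T : STree GLab, MarkedEncoder k α T →
      (∃ T', N.Reaches T T' ∧ PerfectCopyEnc T T') ∧
      (∀ T', N.Reaches T T' → T'.rootLabel = .endCopy → LossyCopyEnc T T')

/-- The kept versions (in `os`) of the children (in `ts`) of the root which were
originally labelled `ω`. -/
def keptOmega (ts : List (STree GLab)) (os : List (Option (STree GLab))) :
    List (STree GLab) :=
  (ts.zip os).filterMap
    (fun p => if p.1.rootLabel.baseOf = GLab.omega then p.2 else none)

/-- A small-initialized encoder for `α` : an encoder for `α` whose root is labelled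
`start_sm`. -/
def SmallInitEncoder (k : ℕ) (α : ONote) (T : STree GLab) : Prop :=
  IsEncoder k α T ∧ T.rootLabel = .startSm

/-- A lossy smallest-child encoder for a small-initialized encoder `T` (with `v_1,…,v_n`
the children of the root labelled `ω`): a tree `T'` containing all nodes of `T` except
possibly some inside the subtrees of the `v_i` (each of which may vanish entirely), with
all labels as in `T` except that the root is labelled `end_sm` and each surviving `v_i` is
labelled `smallest` iff the ordinal encoded by its subtree in `T'` is the smallest among
the ordinals encoded in `T'` by the subtrees of the surviving `v_j` (and otherwise keeps
its label). -/
def LossySmallestEnc (k : ℕ) (T T' : STree GLab) : Prop :=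
  ∃ (ts : List (STree GLab)) (os : List (Option (STree GLab))),
    T = .node .startSm ts ∧ os.length = ts.length ∧
    TreeEquiv T' (.node .endSm os.reduceOption) ∧
    ∀ (i : ℕ) (hi : i < ts.length) (hj : i < os.length),
      ((ts.get ⟨i, hi⟩).rootLabel.baseOf ≠ .omega →
          os.get ⟨i, hj⟩ = some (ts.get ⟨i, hi⟩)) ∧
      ((ts.get ⟨i, hi⟩).rootLabel.baseOf = .omega →
        os.get ⟨i, hj⟩ = none ∨
        ∃ (b : GLab) (cs' : List (STree GLab)),
          os.get ⟨i, hj⟩ = some (.node b cs') ∧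
          ForestLe cs' (ts.get ⟨i, hi⟩).children ∧
          (b = GLab.relabTo .smallest (ts.get ⟨i, hi⟩).rootLabel ∨
            b = (ts.get ⟨i, hi⟩).rootLabel) ∧
          (b = GLab.relabTo .smallest (ts.get ⟨i, hi⟩).rootLabel ↔
            ∀ u ∈ keptOmega ts os,
              ONote.repr (decodeT (k - 1) (.node b cs')) ≤ ONote.repr (decodeT (k - 1) u)))

/-- A `k`-smallest-child gadget : a `k`-NRCS such that for every `α ≤ (Ω_{k+1})_ℓ` and
every small-initialized encoder `T` for `α` : (1) there is a run from `T` to the perfect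
(deletion-free) smallest-child encoder of `T`, and (2) every run from `T` ending in a tree
whose root is labelled `end_sm` ends in a lossy smallest-child encoder of `T`. -/
def IsSmallestGadget (k l : ℕ) (N : NRCS GLab k) : Prop :=
  ∀ α : ONote, α.NF → α ≤ ONote.towerFS (k + 1) l →
    ∀ T : STree GLab, SmallInitEncoder k α T →
      (∃ T', N.Reaches T T' ∧ LossySmallestEnc k T T' ∧ T'.size = T.size) ∧
      (∀ T', N.Reaches T T' → T'.rootLabel = .endSm → LossySmallestEnc k T T')

/-- A big-initialized encoder for `α` : an encoder for `α` whose root is labelled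
`start_big`. -/
def BigInitEncoder (k : ℕ) (α : ONote) (T : STree GLab) : Prop :=
  IsEncoder k α T ∧ T.rootLabel = .startBig

/-- A lossy biggest-child encoder: as the lossy smallest-child encoder, with `end_big` and
`biggest` in place of `end_sm` and `smallest`, and with "biggest" in place of "smallest". -/
def LossyBiggestEnc (k : ℕ) (T T' : STree GLab) : Prop :=
  ∃ (ts : List (STree GLab)) (os : List (Option (STree GLab))),
    T = .node .startBig ts ∧ os.length = ts.length ∧
    TreeEquiv T' (.node .endBig os.reduceOption) ∧
    ∀ (i : ℕ) (hi : i < ts.length) (hj : i < os.length),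
      ((ts.get ⟨i, hi⟩).rootLabel.baseOf ≠ .omega →
          os.get ⟨i, hj⟩ = some (ts.get ⟨i, hi⟩)) ∧
      ((ts.get ⟨i, hi⟩).rootLabel.baseOf = .omega →
        os.get ⟨i, hj⟩ = none ∨
        ∃ (b : GLab) (cs' : List (STree GLab)),
          os.get ⟨i, hj⟩ = some (.node b cs') ∧
          ForestLe cs' (ts.get ⟨i, hi⟩).children ∧
          (b = GLab.relabTo .biggest (ts.get ⟨i, hi⟩).rootLabel ∨
            b = (ts.get ⟨i, hi⟩).rootLabel) ∧
          (b = GLab.relabTo .biggest (ts.get ⟨i, hi⟩).rootLabel ↔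
            ∀ u ∈ keptOmega ts os,
              ONote.repr (decodeT (k - 1) u) ≤ ONote.repr (decodeT (k - 1) (.node b cs'))))

/-- A `k`-biggest-child gadget : a `k`-NRCS such that for every `α < (Ω_{k+1})_ℓ` and
every big-initialized encoder `T` for `α` : (1) there is a run from `T` to the perfect
(deletion-free) biggest-child encoder of `T`, and (2) every run from `T` ending in a tree
whose root is labelled `end_big` ends in a lossy biggest-child encoder of `T`. -/
def IsBiggestGadget (k l : ℕ) (N : NRCS GLab k) : Prop :=
  ∀ α : ONote, α.NF → α < ONote.towerFS (k + 1) l →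
    ∀ T : STree GLab, BigInitEncoder k α T →
      (∃ T', N.Reaches T T' ∧ LossyBiggestEnc k T T' ∧ T'.size = T.size) ∧
      (∀ T', N.Reaches T T' → T'.rootLabel = .endBig → LossyBiggestEnc k T T')

/-- A comparator encoder for `α` : an encoder for `α` whose root is labelled `start_cmp`
and exactly two children `v_A, v_B` of the root are labelled `A_cmp` and `B_cmp`. -/
def ComparatorEnc (k : ℕ) (α : ONote) (T : STree GLab) : Prop :=
  IsEncoder k α T ∧ T.rootLabel = .startCmp ∧
    T.children.countP (fun t => decide (t.rootLabel.baseOf = GLab.acmp)) = 1 ∧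
    T.children.countP (fun t => decide (t.rootLabel.baseOf = GLab.bcmp)) = 1

/-- A lossy compared encoder for a comparator encoder `T` : a tree `T'` containing all
nodes of `T` except possibly some inside the subtrees of `v_A` and `v_B`, with all labels
as in `T` except that the root is labelled `end_cmp` and `v_A, v_B` are both labelled
`equal_cmp` if the ordinals encoded in `T'` by their subtrees are equal, and otherwise the
one with the larger encoded ordinal is labelled `big_cmp` and the other `small_cmp`. -/
def LossyCmpEnc (k : ℕ) (T T' : STree GLab) : Prop :=
  ∃ (ts rest : List (STree GLab)) (la lb : GLab)
    (csA csB csA' csB' : List (STree GLab)) (a b : GLab),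
    T = .node .startCmp ts ∧
    ts.Perm (.node la csA :: .node lb csB :: rest) ∧
    la.baseOf = .acmp ∧ lb.baseOf = .bcmp ∧
    ForestLe csA' csA ∧ ForestLe csB' csB ∧
    TreeEquiv T' (.node .endCmp (.node a csA' :: .node b csB' :: rest)) ∧
    (ONote.repr (decodeT (k - 1) (.node a csA')) =
        ONote.repr (decodeT (k - 1) (.node b csB')) →
      a = GLab.relabTo .equalCmp la ∧ b = GLab.relabTo .equalCmp lb) ∧
    (ONote.repr (decodeT (k - 1) (.node a csA')) <
        ONote.repr (decodeT (k - 1) (.node b csB')) →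
      a = GLab.relabTo .smallCmp la ∧ b = GLab.relabTo .bigCmp lb) ∧
    (ONote.repr (decodeT (k - 1) (.node b csB')) <
        ONote.repr (decodeT (k - 1) (.node a csA')) →
      a = GLab.relabTo .bigCmp la ∧ b = GLab.relabTo .smallCmp lb)

/-- A `k`-comparator gadget : a `k`-NRCS such that for every `α < (Ω_{k+1})_ℓ` and every
comparator encoder `T` for `α` : (1) there is a run from `T` to the perfect
(deletion-free) compared encoder of `T`, and (2) every run from `T` ending in a tree whose
root is labelled `end_cmp` ends in a lossy compared encoder of `T`. -/
def IsCmpGadget (k l : ℕ) (N : NRCS GLab k) : Prop :=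
  ∀ α : ONote, α.NF → α < ONote.towerFS (k + 1) l →
    ∀ T : STree GLab, ComparatorEnc k α T →
      (∃ T', N.Reaches T T' ∧ LossyCmpEnc k T T' ∧ T'.size = T.size) ∧
      (∀ T', N.Reaches T T' → T'.rootLabel = .endCmp → LossyCmpEnc k T T')

open Function

namespace List

variable {α : Type*}

theorem eq_of_countP_eq_one {P : α → Bool} {l : List α} {a b : α} (ha : a ∈ l) (hb : b ∈ l)
    (hPa : P a) (hPb : P b) (h : l.countP P = 1) : a = b := by
  rw [countP_eq_length_filter, length_eq_one_iff] at h
  obtain ⟨c, hc⟩ := h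
  have ha' : a ∈ l.filter P := mem_filter.2 ⟨ha, hPa⟩
  have hb' : b ∈ l.filter P := mem_filter.2 ⟨hb, hPb⟩
  rw [hc, mem_singleton] at ha' hb'
  rw [ha', hb']

theorem countP_append_eq_zero_of_countP_append_cons_eq_one {P : α → Bool} {l r : List α}
    {a : α} (hPa : P a) (h : (l ++ a :: r).countP P = 1) : (l ++ r).countP P = 0 := by
  rw [countP_append, countP_cons, if_pos hPa] at h
  rw [countP_append]
  omega

end List

mutual
  theorem TreeEquiv.refl {Q : Type} : ∀ t : STree Q, TreeEquiv t t
    | .node _ ts => .node (ForestEquiv.refl ts)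
  theorem ForestEquiv.refl {Q : Type} : ∀ ts : List (STree Q), ForestEquiv ts ts
    | [] => .nil
    | t :: ts => .cons (TreeEquiv.refl t) (ForestEquiv.refl ts)
end

theorem List.Perm.forestEquiv {Q : Type} {ts us : List (STree Q)} (h : ts.Perm us) :
    ForestEquiv ts us :=
  (ForestEquiv.refl ts).permR h

def STree.relabelRoot {Q : Type} (f : Q → Q) : STree Q → STree Q
  | .node a ts => .node (f a) ts

theorem STree.relabelRoot_update_of_ne {Q : Type} [DecidableEq Q] {x y : Q} {t : STree Q}
    (ht : t.rootLabel ≠ x) : t.relabelRoot (update id x y) = t := by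
  obtain ⟨a, ts⟩ := t
  exact congrArg (STree.node · ts) (update_of_ne ht _ _)

theorem STree.map_relabelRoot_update_self {Q : Type} [DecidableEq Q] (x : Q)
    (ts : List (STree Q)) : ts.map (STree.relabelRoot (update id x x)) = ts := by
  have hid : STree.relabelRoot (update id x x) = id := by
    funext ⟨a, cs⟩
    by_cases ha : a = x
    · subst ha; simp [STree.relabelRoot]
    · simp [STree.relabelRoot, update_of_ne ha]
  rw [hid, List.map_id]

theorem STree.map_relabelRoot_update_of_forall_ne {Q : Type} [DecidableEq Q] {x y : Q}
    {ts : List (STree Q)} (hts : ∀ t ∈ ts, t.rootLabel ≠ x) :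
    ts.map (STree.relabelRoot (update id x y)) = ts :=
  (List.map_congr_left fun _ ht => STree.relabelRoot_update_of_ne (hts _ ht)).trans (List.map_id ts)

theorem STree.size_relabelRoot {Q : Type} (f : Q → Q) (t : STree Q) :
    (t.relabelRoot f).size = t.size := by
  obtain ⟨a, cs⟩ := t
  simp [STree.relabelRoot, STree.size]

theorem STree.sizeL_map {Q : Type} {f : STree Q → STree Q} (hf : ∀ t, (f t).size = t.size) :
    ∀ ts : List (STree Q), STree.sizeL (ts.map f) = STree.sizeL ts
  | [] => rfl
  | t :: ts => by simp only [List.map_cons, STree.sizeL, hf, STree.sizeL_map hf ts]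

section UStep

variable {Q : Type} {p q x y : Q}

theorem UStep.exists_eq_of_two_two {C C' : STree Q} (h : UStep [p, x] [q, y] C C') :
    ∃ l cs r, C = .node p (l ++ .node x cs :: r) ∧ C' = .node q (l ++ .node y cs :: r) := by
  cases h with
  | go _ _ _ _ l r hinner =>
    cases hinner with
    | last _ _ _ cs => exact ⟨l, cs, r, rfl, rfl⟩
    | delete _ _ hps => exact absurd rfl hps
    | go _ _ hps => exact absurd rfl hps

theorem UStep.rootLabel_eq {ps qs : List Q} {C C' : STree Q} (h : UStep (p :: ps) qs C C') :
    C.rootLabel = p := by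
  cases h <;> rfl

variable [DecidableEq Q] {P : STree Q → Bool}

theorem map_relabelRoot_update_middle (hP : ∀ cs, P (.node x cs)) {l r cs : List (STree Q)}
    (hc : (l ++ .node x cs :: r).countP P = 1) :
    (l ++ .node x cs :: r).map (STree.relabelRoot (update id x y)) = l ++ .node y cs :: r := by
  have hlr := List.countP_eq_zero.1
    (List.countP_append_eq_zero_of_countP_append_cons_eq_one (hP cs) hc)
  have hne : ∀ t ∈ l ++ r, t.rootLabel ≠ x := by
    rintro ⟨a, ts⟩ ht rfl
    exact hlr _ ht (hP ts)
  simp only [List.mem_append] at hne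
  simp [STree.relabelRoot, STree.map_relabelRoot_update_of_forall_ne fun t ht => hne t (.inl ht),
    STree.map_relabelRoot_update_of_forall_ne fun t ht => hne t (.inr ht)]

theorem UStep.eq_map_relabelRoot_of_countP_eq_one {r : Q} {ts : List (STree Q)}
    {t C' : STree Q} (h : UStep [p, x] [q, y] (.node r ts) C') (ht : t ∈ ts) (hPt : P t)
    (hP : ∀ cs, P (.node x cs)) (hc : ts.countP P = 1) :
    t.rootLabel = x ∧ C' = .node q (ts.map (STree.relabelRoot (update id x y))) := by
  obtain ⟨l, cs, r, hC, rfl⟩ := h.exists_eq_of_two_two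
  obtain ⟨-, rfl⟩ := STree.node.inj hC
  obtain rfl := List.eq_of_countP_eq_one ht (by simp) hPt (hP cs) hc
  exact ⟨rfl, by rw [map_relabelRoot_update_middle hP hc]⟩

theorem UStep.map_relabelRoot_of_countP_eq_one {ts cs : List (STree Q)}
    (ht : .node x cs ∈ ts) (hP : ∀ cs, P (.node x cs)) (hc : ts.countP P = 1) :
    UStep [p, x] [q, y] (.node p ts) (.node q (ts.map (STree.relabelRoot (update id x y)))) := by
  obtain ⟨l, r, rfl⟩ := List.append_of_mem ht
  rw [map_relabelRoot_update_middle hP hc]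
  exact .go p q (List.cons_ne_nil _ _) (List.cons_ne_nil _ _) l r (.last x y [] cs)

end UStep

theorem ONote.repr_le_repr_nadd : ∀ x y : ONote,
    x.repr ≤ (x.nadd y).repr ∧ y.repr ≤ (x.nadd y).repr
  | .zero, y => by rw [ONote.nadd]; simp
  | .oadd e₁ n₁ a₁, .zero => by rw [ONote.nadd]; simp
  | .oadd e₁ n₁ a₁, .oadd e₂ n₂ a₂ => by
    have hlt := ONote.repr_le_repr_nadd (.oadd e₁ n₁ a₁) a₂
    have heq := ONote.repr_le_repr_nadd a₁ a₂
    have hgt := ONote.repr_le_repr_nadd a₁ (.oadd e₂ n₂ a₂)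
    rw [ONote.nadd]
    split
    · exact ⟨hlt.1.trans le_add_self, add_le_add_right hlt.2 _⟩
    · rename_i hc
      obtain rfl : e₁ = e₂ := ONote.eq_of_cmp_eq hc
      simp only [ONote.repr, PNat.add_coe, Nat.cast_add, mul_add, add_assoc]
      exact ⟨add_le_add le_rfl (heq.1.trans le_add_self),
        (add_le_add le_rfl heq.2).trans le_add_self⟩
    · exact ⟨add_le_add_right hgt.1 _, hgt.2.trans le_add_self⟩
  termination_by x y => x.cnt + y.cnt
  decreasing_by all_goals (simp [ONote.cnt] <;> omega)

theorem omega0_opow_le_repr_decodeL {d : ℕ} {t : STree GLab} :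
    ∀ {ts : List (STree GLab)}, t ∈ ts →
      Ordinal.omega0 ^ (decodeT d t).repr ≤ (decodeL d ts).repr
  | u :: ts, ht => by
    have hbound := ONote.repr_le_repr_nadd (.oadd (decodeT d u) 1 .zero) (decodeL d ts)
    rw [decodeL]
    rcases List.mem_cons.1 ht with rfl | ht
    · simpa using hbound.1
    · exact (omega0_opow_le_repr_decodeL ht).trans hbound.2

namespace CmpGadget

open GLab

abbrev pairLeaf (m : GLab) (j : ℕ) : STree GLab := .node (.pair m j) []

theorem repr_decodeT_pairLeaf (m : GLab) (j : ℕ) : (decodeT 0 (pairLeaf m j)).repr = j := by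
  simp [decodeT, ONote.repr_ofNat]

theorem exists_pairLeaf_of_mem {ts : List (STree GLab)} {t : STree GLab} (hwf : WFEncL 0 ts)
    (ht : t ∈ ts) : ∃ m j, t = pairLeaf m j := by
  induction ts with
  | nil => cases ht
  | cons u ts ih =>
    rw [WFEncL] at hwf
    rcases List.mem_cons.1 ht with rfl | ht
    · obtain ⟨lab, cs⟩ := t
      obtain ⟨rfl, m, j, rfl⟩ := hwf.1
      exact ⟨m, j, rfl⟩
    · exact ih hwf.2 ht

theorem lt_of_pairLeaf_mem {l j : ℕ} {m : GLab} {ts : List (STree GLab)}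
    (hα : decodeL 0 ts < ONote.towerFS 2 l) (hm : pairLeaf m j ∈ ts) : j < l := by
  have hle := omega0_opow_le_repr_decodeL (d := 0) hm
  have hlt : (decodeL 0 ts).repr < Ordinal.omega0 ^ (l : Ordinal) := by
    simpa [ONote.lt_def, ONote.towerFS, ONote.repr_ofNat] using hα
  rw [repr_decodeT_pairLeaf] at hle
  exact_mod_cast (Ordinal.opow_lt_opow_iff_right Ordinal.one_lt_omega0).1 (hle.trans_lt hlt)

def cmpOutcome (i j : ℕ) : GLab :=
  match compare i j with
  | .lt => .smallCmp
  | .eq => .equalCmp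
  | .gt => .bigCmp

theorem cmpOutcome_self (i : ℕ) : cmpOutcome i i = .equalCmp := by
  simp [cmpOutcome]

theorem cmpOutcome_of_lt {i j : ℕ} (h : i < j) :
    cmpOutcome i j = .smallCmp ∧ cmpOutcome j i = .bigCmp := by
  simp [cmpOutcome, compare_lt_iff_lt.2 h, compare_gt_iff_gt.2 h]

theorem cmpOutcome_ne_acmp (i j : ℕ) : cmpOutcome i j ≠ .acmp := by
  unfold cmpOutcome; split <;> simp

theorem cmpOutcome_ne_bcmp (i j : ℕ) : cmpOutcome i j ≠ .bcmp := by
  unfold cmpOutcome; split <;> simp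

def readA (jA : ℕ) : List GLab × List GLab :=
  ([.startCmp, .pair .acmp jA], [.aux jA, .pair .acmp jA])

/-- After reading `v_B` the root stores the label that `v_A` is going to receive. -/
def readB (jA jB : ℕ) : List GLab × List GLab :=
  ([.aux jA, .pair .bcmp jB], [.pair (cmpOutcome jA jB) jA, .pair (cmpOutcome jB jA) jB])

def writeA (jA jB : ℕ) : List GLab × List GLab :=
  ([.pair (cmpOutcome jA jB) jA, .pair .acmp jA], [.endCmp, .pair (cmpOutcome jA jB) jA])

def cmpGadget (l : ℕ) : NRCS GLab 1 where
  update := (Finset.range l ×ˢ Finset.range l).biUnion fun j =>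
    {readA j.1, readB j.1 j.2, writeA j.1 j.2}
  reset := ∅
  update_wf := by
    simp only [Finset.mem_biUnion, Finset.mem_insert, Finset.mem_singleton]
    rintro _ ⟨_, -, rfl | rfl | rfl⟩ <;> simp [readA, readB, writeA]
  reset_wf := by simp

theorem step_cases {l : ℕ} {C C' : STree GLab} (h : (cmpGadget l).Step C C') :
    ∃ jA jB, UStep (readA jA).1 (readA jA).2 C C' ∨
      UStep (readB jA jB).1 (readB jA jB).2 C C' ∨
      UStep (writeA jA jB).1 (writeA jA jB).2 C C' := by
  obtain ⟨_ | _, ht, hs⟩ := h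
  · change UStep _ _ C C' at hs
    simp only [NRCS.hasTrans, cmpGadget, Finset.mem_biUnion, Finset.mem_insert,
      Finset.mem_singleton] at ht
    obtain ⟨⟨jA, jB⟩, -, ht | ht | ht⟩ := ht <;> refine ⟨jA, jB, ?_⟩ <;>
      rw [← ht] <;> simp only [hs, true_or, or_true]
  · simp [NRCS.hasTrans, cmpGadget] at ht

theorem step_of_ustep {l jA jB : ℕ} (hjA : jA < l) (hjB : jB < l) {t : List GLab × List GLab}
    (ht : t = readA jA ∨ t = readB jA jB ∨ t = writeA jA jB) {C C' : STree GLab}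
    (h : UStep t.1 t.2 C C') : (cmpGadget l).Step C C' := by
  refine ⟨.upd t.1 t.2, ?_, h⟩
  simp only [NRCS.hasTrans, cmpGadget, Finset.mem_biUnion, Finset.mem_insert,
    Finset.mem_singleton, Finset.mem_product, Finset.mem_range]
  exact ⟨(jA, jB), ⟨hjA, hjB⟩, ht⟩

def relabelB (ts : List (STree GLab)) (jA jB : ℕ) : List (STree GLab) :=
  ts.map (STree.relabelRoot (update id (.pair .bcmp jB) (.pair (cmpOutcome jB jA) jB)))

def relabelAB (ts : List (STree GLab)) (jA jB : ℕ) : List (STree GLab) :=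
  (relabelB ts jA jB).map
    (STree.relabelRoot (update id (.pair .acmp jA) (.pair (cmpOutcome jA jB) jA)))

def cmpRun (ts : List (STree GLab)) (jA jB : ℕ) : List (STree GLab) :=
  [.node .startCmp ts, .node (.aux jA) ts, .node (.pair (cmpOutcome jA jB) jA) (relabelB ts jA jB),
    .node .endCmp (relabelAB ts jA jB)]

theorem size_relabelAB (ts : List (STree GLab)) (jA jB : ℕ) (a b : GLab) :
    (STree.node a (relabelAB ts jA jB)).size = (STree.node b ts).size := by
  simp only [STree.size, relabelAB, relabelB, STree.sizeL_map (STree.size_relabelRoot _)]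

structure CmpChildren (ts : List (STree GLab)) (jA jB : ℕ) : Prop where
  mem_a : pairLeaf .acmp jA ∈ ts
  mem_b : pairLeaf .bcmp jB ∈ ts
  countP_a : ts.countP (fun t => decide (t.rootLabel.baseOf = .acmp)) = 1
  countP_b : ts.countP (fun t => decide (t.rootLabel.baseOf = .bcmp)) = 1

namespace CmpChildren

variable {l : ℕ} {ts : List (STree GLab)} {jA jB : ℕ} {C : STree GLab}

theorem countP_a_relabelB (h : CmpChildren ts jA jB) :
    (relabelB ts jA jB).countP (fun t => decide (t.rootLabel.baseOf = .acmp)) = 1 := by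
  rw [relabelB, List.countP_map, ← h.countP_a]
  refine List.countP_congr fun ⟨a, cs⟩ _ => ?_
  by_cases ha : a = .pair .bcmp jB
  · subst ha
    simp [STree.relabelRoot, STree.rootLabel, GLab.baseOf, cmpOutcome_ne_acmp]
  · rw [Function.comp_apply, STree.relabelRoot_update_of_ne (t := .node a cs) ha]

theorem mem_a_relabelB (h : CmpChildren ts jA jB) : pairLeaf .acmp jA ∈ relabelB ts jA jB :=
  List.mem_map.2 ⟨_, h.mem_a, STree.relabelRoot_update_of_ne (by simp [STree.rootLabel])⟩

theorem step_of_start (h : CmpChildren ts jA jB) (hs : (cmpGadget l).Step (.node .startCmp ts) C) :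
    C = .node (.aux jA) ts := by
  obtain ⟨a, b, hs | hs | hs⟩ := step_cases hs
  · obtain ⟨hroot, rfl⟩ :=
      hs.eq_map_relabelRoot_of_countP_eq_one h.mem_a rfl (fun _ => rfl) h.countP_a
    obtain rfl : jA = a := by simpa [STree.rootLabel] using hroot
    exact congrArg _ (STree.map_relabelRoot_update_self _ ts)
  · simpa [STree.rootLabel] using hs.rootLabel_eq
  · simpa [STree.rootLabel] using hs.rootLabel_eq

theorem step_after_readA (h : CmpChildren ts jA jB) (hs : (cmpGadget l).Step (.node (.aux jA) ts) C) :
    C = .node (.pair (cmpOutcome jA jB) jA) (relabelB ts jA jB) := by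
  obtain ⟨a, b, hs | hs | hs⟩ := step_cases hs
  · simpa [STree.rootLabel] using hs.rootLabel_eq
  · obtain rfl : jA = a := by simpa [STree.rootLabel] using hs.rootLabel_eq
    obtain ⟨hleaf, rfl⟩ :=
      hs.eq_map_relabelRoot_of_countP_eq_one h.mem_b rfl (fun _ => rfl) h.countP_b
    obtain rfl : jB = b := by simpa [STree.rootLabel] using hleaf
    rfl
  · simpa [STree.rootLabel] using hs.rootLabel_eq

theorem step_after_readB (h : CmpChildren ts jA jB)
    (hs : (cmpGadget l).Step (.node (.pair (cmpOutcome jA jB) jA) (relabelB ts jA jB)) C) :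
    C = .node .endCmp (relabelAB ts jA jB) := by
  obtain ⟨a, b, hs | hs | hs⟩ := step_cases hs
  · simpa [STree.rootLabel] using hs.rootLabel_eq
  · simpa [STree.rootLabel] using hs.rootLabel_eq
  · obtain ⟨houtcome, rfl⟩ : cmpOutcome jA jB = cmpOutcome a b ∧ jA = a := by
      simpa [STree.rootLabel] using hs.rootLabel_eq
    obtain ⟨-, rfl⟩ := hs.eq_map_relabelRoot_of_countP_eq_one h.mem_a_relabelB rfl
      (fun _ => rfl) h.countP_a_relabelB
    simp only [relabelAB, houtcome]

theorem not_step_end {ts' : List (STree GLab)} : ¬ (cmpGadget l).Step (.node .endCmp ts') C := by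
  intro hs
  obtain ⟨a, b, hs | hs | hs⟩ := step_cases hs <;> simpa [STree.rootLabel] using hs.rootLabel_eq

theorem mem_cmpRun_of_reaches (h : CmpChildren ts jA jB)
    (hr : (cmpGadget l).Reaches (.node .startCmp ts) C) : C ∈ cmpRun ts jA jB := by
  induction hr with
  | refl => simp [cmpRun]
  | tail _ hs ih =>
    simp only [cmpRun, List.mem_cons, List.not_mem_nil, or_false] at ih ⊢
    rcases ih with rfl | rfl | rfl | rfl
    · exact .inr (.inl (h.step_of_start hs))
    · exact .inr (.inr (.inl (h.step_after_readA hs)))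
    · exact .inr (.inr (.inr (h.step_after_readB hs)))
    · exact absurd hs not_step_end

theorem reaches_end (h : CmpChildren ts jA jB) (hjA : jA < l) (hjB : jB < l) :
    (cmpGadget l).Reaches (.node .startCmp ts) (.node .endCmp (relabelAB ts jA jB)) := by
  have hreadA := UStep.map_relabelRoot_of_countP_eq_one (p := .startCmp) (q := .aux jA)
    (y := .pair .acmp jA) h.mem_a (fun _ => rfl) h.countP_a
  rw [STree.map_relabelRoot_update_self] at hreadA
  have hreadB := UStep.map_relabelRoot_of_countP_eq_one (p := .aux jA)
    (q := .pair (cmpOutcome jA jB) jA) (y := .pair (cmpOutcome jB jA) jB)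
    h.mem_b (fun _ => rfl) h.countP_b
  have hwriteA := UStep.map_relabelRoot_of_countP_eq_one (p := .pair (cmpOutcome jA jB) jA)
    (q := .endCmp) (y := .pair (cmpOutcome jA jB) jA)
    h.mem_a_relabelB (fun _ => rfl) h.countP_a_relabelB
  exact .tail (.tail (.single (step_of_ustep hjA hjB (.inl rfl) hreadA))
    (step_of_ustep hjA hjB (.inr (.inl rfl)) hreadB))
    (step_of_ustep hjA hjB (.inr (.inr rfl)) hwriteA)

theorem exists_perm (h : CmpChildren ts jA jB) :
    ∃ rest, ts.Perm (pairLeaf .acmp jA :: pairLeaf .bcmp jB :: rest) ∧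
      ∀ t ∈ rest, t.rootLabel.baseOf ≠ .acmp ∧ t.rootLabel.baseOf ≠ .bcmp := by
  obtain ⟨l₁, r₁, rfl⟩ := List.append_of_mem h.mem_a
  have hb : pairLeaf .bcmp jB ∈ l₁ ++ r₁ := by
    simpa using h.mem_b
  obtain ⟨l₂, r₂, hlr⟩ := List.append_of_mem hb
  have hperm : (l₁ ++ pairLeaf .acmp jA :: r₁).Perm
      (pairLeaf .acmp jA :: pairLeaf .bcmp jB :: (l₂ ++ r₂)) :=
    List.perm_middle.trans (.cons _ (hlr ▸ List.perm_middle))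
  refine ⟨l₂ ++ r₂, hperm, fun t ht => ⟨fun hA => ?_, fun hB => ?_⟩⟩
  · have hc := (hperm.countP_eq _).symm.trans h.countP_a
    rw [List.countP_cons_of_pos (by rfl),
      List.countP_cons_of_neg (by simp [STree.rootLabel, GLab.baseOf])] at hc
    exact List.countP_eq_zero.1 (Nat.add_eq_right.1 hc) t ht (decide_eq_true hA)
  · have hc := (hperm.countP_eq _).symm.trans h.countP_b
    rw [List.countP_cons_of_neg (by simp [STree.rootLabel, GLab.baseOf]),
      List.countP_cons_of_pos (by rfl)] at hc
    exact List.countP_eq_zero.1 (Nat.add_eq_right.1 hc) t ht (decide_eq_true hB)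

theorem perm_relabelAB (h : CmpChildren ts jA jB) :
    ∃ rest, ts.Perm (pairLeaf .acmp jA :: pairLeaf .bcmp jB :: rest) ∧
      (relabelAB ts jA jB).Perm
        (pairLeaf (cmpOutcome jA jB) jA :: pairLeaf (cmpOutcome jB jA) jB :: rest) := by
  obtain ⟨rest, hperm, hrest⟩ := h.exists_perm
  have hrestA : ∀ t ∈ rest, t.rootLabel ≠ .pair .acmp jA :=
    fun t ht he => (hrest t ht).1 (by rw [he]; rfl)
  have hrestB : ∀ t ∈ rest, t.rootLabel ≠ .pair .bcmp jB :=
    fun t ht he => (hrest t ht).2 (by rw [he]; rfl)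
  refine ⟨rest, hperm, ?_⟩
  have := (hperm.map
    (STree.relabelRoot (update id (.pair .bcmp jB) (.pair (cmpOutcome jB jA) jB)))).map
      (STree.relabelRoot (update id (.pair .acmp jA) (.pair (cmpOutcome jA jB) jA)))
  simp only [List.map_cons, STree.map_relabelRoot_update_of_forall_ne hrestA,
    STree.map_relabelRoot_update_of_forall_ne hrestB] at this
  simpa [relabelAB, relabelB, STree.relabelRoot, cmpOutcome_ne_acmp] using this

theorem lossyCmpEnc_end (h : CmpChildren ts jA jB) :
    LossyCmpEnc 1 (.node .startCmp ts) (.node .endCmp (relabelAB ts jA jB)) := by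
  obtain ⟨rest, hperm, hrel⟩ := h.perm_relabelAB
  refine ⟨ts, rest, .pair .acmp jA, .pair .bcmp jB, [], [], [], [],
    .pair (cmpOutcome jA jB) jA, .pair (cmpOutcome jB jA) jB, rfl, hperm, rfl, rfl,
    .nil _, .nil _, .node hrel.forestEquiv, ?_, ?_, ?_⟩ <;>
    simp only [Nat.sub_self, repr_decodeT_pairLeaf, Nat.cast_inj, Nat.cast_lt]
  · rintro rfl
    simp [cmpOutcome_self, GLab.relabTo]
  · intro hlt
    simp [cmpOutcome_of_lt hlt, GLab.relabTo]
  · intro hlt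
    simp [cmpOutcome_of_lt hlt, GLab.relabTo]

theorem eq_end_of_reaches (h : CmpChildren ts jA jB)
    (hr : (cmpGadget l).Reaches (.node .startCmp ts) C) (hend : C.rootLabel = .endCmp) :
    C = .node .endCmp (relabelAB ts jA jB) := by
  have hmem := h.mem_cmpRun_of_reaches hr
  simp only [cmpRun, List.mem_cons, List.not_mem_nil, or_false] at hmem
  rcases hmem with rfl | rfl | rfl | rfl <;> first | rfl | cases hend

end CmpChildren

theorem exists_pairLeaf_of_countP_eq_one {ts : List (STree GLab)} {m : GLab}
    (hwf : WFEncL 0 ts) (hc : ts.countP (fun t => decide (t.rootLabel.baseOf = m)) = 1) :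
    ∃ j, pairLeaf m j ∈ ts := by
  obtain ⟨t, ht, hm⟩ := List.countP_pos_iff.1 (hc ▸ Nat.one_pos)
  obtain ⟨m', j, rfl⟩ := exists_pairLeaf_of_mem hwf ht
  obtain rfl : m' = m := of_decide_eq_true hm
  exact ⟨j, ht⟩

theorem exists_cmpChildren_of_comparatorEnc {l : ℕ} {α : ONote} {T : STree GLab}
    (hT : ComparatorEnc 1 α T) (hα : α < ONote.towerFS 2 l) :
    ∃ ts jA jB, T = .node .startCmp ts ∧ CmpChildren ts jA jB ∧ jA < l ∧ jB < l := by
  obtain ⟨⟨hwf, rfl⟩, hroot, hcA, hcB⟩ := hT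
  obtain ⟨lab, ts⟩ := T
  obtain rfl : lab = .startCmp := hroot
  rw [WFEncT] at hwf
  rw [decodeT] at hα
  obtain ⟨jA, hA⟩ := exists_pairLeaf_of_countP_eq_one hwf hcA
  obtain ⟨jB, hB⟩ := exists_pairLeaf_of_countP_eq_one hwf hcB
  exact ⟨ts, jA, jB, rfl, ⟨hA, hB, hcA, hcB⟩,
    lt_of_pairLeaf_mem hα hA, lt_of_pairLeaf_mem hα hB⟩

end CmpGadget

/-- Existence of 1-comparator gadgets: for every `ℓ ≥ 1`, a
`1`-comparator gadget exists. -/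
theorem one_comparator_gadget_exists (l : ℕ) (hl : 1 ≤ l) :
    ∃ N : NRCS GLab 1, IsCmpGadget 1 l N := by
  refine ⟨CmpGadget.cmpGadget l, fun α _ hα T hT => ?_⟩
  obtain ⟨ts, jA, jB, rfl, hts, hjA, hjB⟩ :=
    CmpGadget.exists_cmpChildren_of_comparatorEnc hT hα
  refine ⟨⟨_, hts.reaches_end hjA hjB, hts.lossyCmpEnc_end,
    CmpGadget.size_relabelAB ts jA jB _ _⟩, fun T' hr hend => ?_⟩
  rw [hts.eq_end_of_reaches hr hend]
  exact hts.lossyCmpEnc_end
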